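/- The universal data (π_u, S, T, A ⊗ V) is a linearly minimal homomorphism dilation system of (φ, A, V): π_u is a unital algebra homomorphism, T is injective, S is surjective, S ∘ π_u(a) ∘ T = φ(a) for all a ∈ A, and span(π_u(A)T(V)) = A ⊗ V. -/
import Mathlib


open scoped TensorProduct

variable (k : Type*) [Field k] (A : Type*) [Ring A] [Algebra k A]
  (V : Type*) [AddCommGroup V] [Module k V]

/-- The universal homomorphism `π_u(a)(b ⊗ x) = (ab) ⊗ x` on `A ⊗ V`. -/
noncomputable def piU : A →ₐ[k] Module.End k (A ⊗[k] V) where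
  toFun a := LinearMap.rTensor V (LinearMap.mulLeft k a)
  map_one' := by ext b v; simp
  map_mul' a b := by ext c v; simp [mul_assoc]
  map_zero' := by ext a v; simp
  map_add' a b := by ext c v; simp [add_mul, TensorProduct.add_tmul]
  commutes' c := by
    ext a v
    simp [Algebra.algebraMap_eq_smul_one, smul_mul_assoc, TensorProduct.smul_tmul']

/-- The universal analysis operator `T(x) = 1 ⊗ x`. -/
noncomputable def Tu : V →ₗ[k] A ⊗[k] V := TensorProduct.mk k A V 1

/-- The universal synthesis operator `S(a ⊗ x) = φ(a) x`. -/
noncomputable def Su (φ : A →ₗ[k] Module.End k V) : A ⊗[k] V →ₗ[k] V :=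
  TensorProduct.lift (φ : A →ₗ[k] V →ₗ[k] V)

/-- the universal data `(π_u, S, T, A ⊗ V)` is a linearly minimal
homomorphism dilation system of `(φ, A, V)`. -/
theorem universal_is_linearly_minimal_dilation (φ : A →ₗ[k] Module.End k V) (hφ : φ 1 = 1) :
    Function.Injective (Tu k A V) ∧
    Function.Surjective (Su k A V φ) ∧
    (∀ a : A, (Su k A V φ) ∘ₗ (piU k A V a : A ⊗[k] V →ₗ[k] A ⊗[k] V) ∘ₗ Tu k A V =
      (φ a : V →ₗ[k] V)) ∧
    Submodule.span k {w : A ⊗[k] V | ∃ (a : A) (x : V), w = piU k A V a (Tu k A V x)} = ⊤ := by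
  have hST : ∀ x : V, Su k A V φ (Tu k A V x) = x := by
    intro x
    simp [Su, Tu, hφ]
  refine ⟨?_, ?_, ?_, ?_⟩
  · intro x y h
    have := congrArg (Su k A V φ) h
    simpa [hST] using this
  · intro x
    exact ⟨Tu k A V x, hST x⟩
  · intro a
    ext x
    simp [Su, Tu, piU]
  · rw [eq_top_iff, ← TensorProduct.span_tmul_eq_top k A V]
    refine Submodule.span_mono ?_
    rintro w ⟨a, x, rfl⟩
    exact ⟨a, x, by simp [piU, Tu]⟩
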